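/- Let n ≥ 1, let v : (0,∞) × ℝⁿ → ℝ be smooth and satisfy ∂v/∂t = Δv − |∇v|² − n/(2t), and let α, β, b, c, λ be real constants with α ≠ 0. Define P = αΔv − β|∇v|² − b·v/t − c·n/t. Then P satisfies the evolution equation ∂P/∂t = ΔP − 2⟨∇P, ∇v⟩ − 2(α−β)|∇²v − (λ/(2t))I|² − (2(α−β)/α)(λ/t)P − (b + 2(α−β)βλ/α)|∇v|²/t + (1 − 2(α−β)λ/α)·b·v/t² + (1 − 2(α−β)λ/α)·c·n/t² + (α−β)nλ²/(2t²) + b·n/(2t²). -/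

import Mathlib

open MeasureTheory Real

noncomputable section

/-- Partial derivative of `g` at `x` in the `i`-th coordinate direction. -/
def pd {n : ℕ} (i : Fin n) (g : (Fin n → ℝ) → ℝ) (x : Fin n → ℝ) : ℝ :=
  fderiv ℝ g x (Pi.single i 1)

/-- Squared Euclidean norm of the (spatial) gradient of `g` at `x`. -/
def gradSq {n : ℕ} (g : (Fin n → ℝ) → ℝ) (x : Fin n → ℝ) : ℝ :=
  ∑ i, (pd i g x) ^ 2

/-- The (spatial) Laplacian of `g` at `x`. -/
def lap {n : ℕ} (g : (Fin n → ℝ) → ℝ) (x : Fin n → ℝ) : ℝ :=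
  ∑ i, pd i (pd i g) x

/-- The `(i,j)` entry of the Hessian of `g` at `x`. -/
def hess {n : ℕ} (i j : Fin n) (g : (Fin n → ℝ) → ℝ) (x : Fin n → ℝ) : ℝ :=
  pd i (pd j g) x

/-!
Only the case `λ = 0` needs an argument: since
`|∇²v - (λ/2t) I|² = |∇²v|² - (λ/t) Δv + n λ² / (4t²)` and `Δv = (P + β|∇v|² + b v/t + c n/t)/α`,
all terms containing `λ` cancel. For `λ = 0`, symmetry of second derivatives on space-time lets
`∂ₜ` commute with the spatial derivatives, so `∂ₜΔv = Δ(∂ₜv)` and `∂ₜ|∇v|² = 2⟨∇v, ∇∂ₜv⟩`, into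
which the equation for `∂ₜv` is substituted. The flat Bochner formula
`Δ|∇v|² = 2|∇²v|² + 2⟨∇v, ∇Δv⟩` then shows that the higher-order terms of `∂ₜP` and
`ΔP - 2⟨∇P, ∇v⟩` cancel, leaving `-2(α - β)|∇²v|²` and lower-order terms.
-/

open Set Function

theorem sum_sq_sub_mul_ite {ι : Type*} [Fintype ι] [DecidableEq ι] (A : ι → ι → ℝ) (c : ℝ) :
    ∑ i, ∑ j, (A i j - c * if i = j then 1 else 0) ^ 2
      = ∑ i, ∑ j, A i j ^ 2 - 2 * c * ∑ i, A i i + Fintype.card ι * c ^ 2 := by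
  have h : ∀ i j, (A i j - c * if i = j then 1 else 0) ^ 2
      = A i j ^ 2 - if i = j then 2 * c * A i j - c ^ 2 else 0 := by
    intro i j
    split_ifs <;> ring
  simp only [h, Finset.sum_sub_distrib, Finset.sum_ite_eq, Finset.mem_univ, if_true,
    Finset.mul_sum, Finset.sum_const, Finset.card_univ, nsmul_eq_mul]
  ring

section SecondDerivative

variable {E : Type*} [NormedAddCommGroup E] [NormedSpace ℝ E] {f : E → ℝ} {U : Set E} {p : E}

theorem fderiv_fderiv_apply_comm (hU : IsOpen U) (hf : ContDiffOn ℝ 2 f U) (hp : p ∈ U) (a b : E) :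
    fderiv ℝ (fun q => fderiv ℝ f q a) p b = fderiv ℝ (fun q => fderiv ℝ f q b) p a := by
  have hfp : ContDiffAt ℝ 2 f p := hf.contDiffAt (hU.mem_nhds hp)
  have hd : DifferentiableAt ℝ (fderiv ℝ f) p :=
    (hfp.fderiv_right (m := 1) le_rfl).differentiableAt one_ne_zero
  have hsymm := hfp.isSymmSndFDerivAt (by simp [minSmoothness_of_isRCLikeNormedField])
  simp [fderiv_clm_apply hd (differentiableAt_const _), hsymm.eq b a]

end SecondDerivative

section Spatial

variable {n : ℕ} {f g : (Fin n → ℝ) → ℝ} {x : Fin n → ℝ} {k m : WithTop ℕ∞} (i : Fin n)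

def gradInner (f g : (Fin n → ℝ) → ℝ) (x : Fin n → ℝ) : ℝ :=
  ∑ i, pd i f x * pd i g x

theorem gradInner_comm (g : (Fin n → ℝ) → ℝ) : gradInner f g x = gradInner g f x :=
  Finset.sum_congr rfl fun _ _ => mul_comm _ _

theorem contDiff_pd (hf : ContDiff ℝ k f) (hmk : m + 1 ≤ k) : ContDiff ℝ m (pd i f) :=
  (hf.fderiv_right hmk).clm_apply contDiff_const

theorem differentiable_pd (hf : ContDiff ℝ 2 f) : Differentiable ℝ (pd i f) :=
  (contDiff_pd i hf (m := 1) le_rfl).differentiable one_ne_zero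

theorem contDiff_lap (hf : ContDiff ℝ k f) (hmk : m + 2 ≤ k) : ContDiff ℝ m (lap f) :=
  ContDiff.sum fun i _ => contDiff_pd i (contDiff_pd i hf (m := m + 1)
    (by rwa [add_assoc, one_add_one_eq_two])) le_rfl

theorem contDiff_gradSq (hf : ContDiff ℝ k f) (hmk : m + 1 ≤ k) : ContDiff ℝ m (gradSq f) :=
  ContDiff.sum fun i _ => (contDiff_pd i hf hmk).pow 2

theorem pd_pd_comm (hf : ContDiff ℝ 2 f) (j : Fin n) : pd i (pd j f) x = pd j (pd i f) x :=
  fderiv_fderiv_apply_comm isOpen_univ hf.contDiffOn (mem_univ x) _ _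

theorem pd_const (c : ℝ) : pd i (fun _ => c) x = 0 := by
  simp [pd]

theorem pd_fun_sub (hf : DifferentiableAt ℝ f x) (hg : DifferentiableAt ℝ g x) :
    pd i (fun y => f y - g y) x = pd i f x - pd i g x := by
  simp [pd, fderiv_fun_sub hf hg]

theorem pd_const_mul (c : ℝ) (hf : DifferentiableAt ℝ f x) :
    pd i (fun y => c * f y) x = c * pd i f x := by
  simp [pd, fderiv_const_mul hf]

theorem pd_div_const (c : ℝ) (hf : DifferentiableAt ℝ f x) :
    pd i (fun y => f y / c) x = pd i f x / c := by
  simp only [pd, div_eq_mul_inv, fderiv_mul_const hf, smul_apply, smul_eq_mul]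
  ring

theorem pd_fun_mul (hf : DifferentiableAt ℝ f x) (hg : DifferentiableAt ℝ g x) :
    pd i (fun y => f y * g y) x = pd i f x * g x + f x * pd i g x := by
  simp only [pd, fderiv_fun_mul hf hg, add_apply, smul_apply, smul_eq_mul]
  ring

theorem pd_fun_sum {ι : Type*} (s : Finset ι) {F : ι → (Fin n → ℝ) → ℝ}
    (hF : ∀ j ∈ s, DifferentiableAt ℝ (F j) x) :
    pd i (fun y => ∑ j ∈ s, F j y) x = ∑ j ∈ s, pd i (F j) x := by
  simp [pd, fderiv_fun_sum hF]

theorem pd_sq (hf : DifferentiableAt ℝ f x) :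
    pd i (fun y => f y ^ 2) x = 2 * (f x * pd i f x) := by
  simp only [pd, fderiv_fun_pow 2 hf, smul_apply, smul_eq_mul]
  ring

theorem lap_const (c : ℝ) : lap (fun _ => c) x = 0 := by
  have h : ∀ i, pd i (fun _ : Fin n → ℝ => c) = fun _ => 0 := fun i => funext fun _ => pd_const i c
  simp [lap, h, pd_const]

theorem lap_fun_sub (hf : ContDiff ℝ 2 f) (hg : ContDiff ℝ 2 g) :
    lap (fun y => f y - g y) x = lap f x - lap g x := by
  have h : ∀ i, pd i (fun y => f y - g y) = fun y => pd i f y - pd i g y := fun i => funext fun y =>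
    pd_fun_sub i (hf.differentiable two_ne_zero y) (hg.differentiable two_ne_zero y)
  rw [lap, lap, lap, ← Finset.sum_sub_distrib]
  refine Finset.sum_congr rfl fun i _ => ?_
  rw [h i, pd_fun_sub i (differentiable_pd i hf x) (differentiable_pd i hg x)]

theorem lap_const_mul (c : ℝ) (hf : ContDiff ℝ 2 f) :
    lap (fun y => c * f y) x = c * lap f x := by
  have h : ∀ i, pd i (fun y => c * f y) = fun y => c * pd i f y := fun i => funext fun y =>
    pd_const_mul i c (hf.differentiable two_ne_zero y)
  rw [lap, lap, Finset.mul_sum]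
  refine Finset.sum_congr rfl fun i _ => ?_
  rw [h i, pd_const_mul i c (differentiable_pd i hf x)]

theorem lap_div_const (c : ℝ) (hf : ContDiff ℝ 2 f) :
    lap (fun y => f y / c) x = lap f x / c := by
  have h : ∀ i, pd i (fun y => f y / c) = fun y => pd i f y / c := fun i => funext fun y =>
    pd_div_const i c (hf.differentiable two_ne_zero y)
  rw [lap, lap, Finset.sum_div]
  refine Finset.sum_congr rfl fun i _ => ?_
  rw [h i, pd_div_const i c (differentiable_pd i hf x)]

theorem lap_fun_sum {ι : Type*} (s : Finset ι) {F : ι → (Fin n → ℝ) → ℝ}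
    (hF : ∀ j ∈ s, ContDiff ℝ 2 (F j)) :
    lap (fun y => ∑ j ∈ s, F j y) x = ∑ j ∈ s, lap (F j) x := by
  have h : ∀ i, pd i (fun y => ∑ j ∈ s, F j y) = fun y => ∑ j ∈ s, pd i (F j) y :=
    fun i => funext fun y => pd_fun_sum i s fun j hj => (hF j hj).differentiable two_ne_zero y
  simp only [lap, Finset.sum_comm (s := s)]
  refine Finset.sum_congr rfl fun i _ => ?_
  rw [h i, pd_fun_sum i s fun j hj => differentiable_pd i (hF j hj) x]

theorem lap_sq (hf : ContDiff ℝ 2 f) :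
    lap (fun y => f y ^ 2) x = 2 * gradSq f x + 2 * (f x * lap f x) := by
  have hd := hf.differentiable two_ne_zero
  have h : ∀ i, pd i (fun y => f y ^ 2) = fun y => 2 * (f y * pd i f y) :=
    fun i => funext fun y => pd_sq i (hd y)
  simp only [lap, gradSq, Finset.mul_sum, ← Finset.sum_add_distrib]
  refine Finset.sum_congr rfl fun i _ => ?_
  rw [h i, pd_const_mul i 2 (f := fun y => f y * pd i f y) ((hd x).mul (differentiable_pd i hf x)),
    pd_fun_mul i (hd x) (differentiable_pd i hf x)]
  ring

theorem pd_lap_comm (hf : ContDiff ℝ 3 f) : pd i (lap f) x = lap (pd i f) x := by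
  have hf2 : ContDiff ℝ 2 f := hf.of_le (by norm_num)
  have hpd : ∀ j, ContDiff ℝ 2 (pd j f) := fun j => contDiff_pd j hf le_rfl
  have hswap : ∀ j, pd i (pd j f) = pd j (pd i f) := fun j => funext fun y => pd_pd_comm i hf2 j
  calc pd i (lap f) x = ∑ j, pd i (pd j (pd j f)) x :=
        pd_fun_sum i _ fun j _ => differentiable_pd j (hpd j) x
    _ = ∑ j, pd j (pd j (pd i f)) x := by
        refine Finset.sum_congr rfl fun j _ => ?_
        rw [pd_pd_comm i (hpd j) j, hswap j]
    _ = lap (pd i f) x := rfl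

theorem lap_gradSq (hf : ContDiff ℝ 3 f) :
    lap (gradSq f) x = 2 * ∑ i, ∑ j, hess i j f x ^ 2 + 2 * gradInner f (lap f) x := by
  have hpd : ∀ j, ContDiff ℝ 2 (pd j f) := fun j => contDiff_pd j hf le_rfl
  calc lap (gradSq f) x = ∑ j, lap (fun y => pd j f y ^ 2) x :=
        lap_fun_sum _ fun j _ => (hpd j).pow 2
    _ = ∑ j, (2 * ∑ i, hess i j f x ^ 2 + 2 * (pd j f x * pd j (lap f) x)) := by
        refine Finset.sum_congr rfl fun j _ => ?_
        rw [lap_sq (hpd j), pd_lap_comm j hf]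
        rfl
    _ = 2 * ∑ i, ∑ j, hess i j f x ^ 2 + 2 * gradInner f (lap f) x := by
        rw [Finset.sum_add_distrib, ← Finset.mul_sum, ← Finset.mul_sum, Finset.sum_comm]
        rfl

end Spatial

section SpaceTime

variable {E : Type*} [NormedAddCommGroup E] [NormedSpace ℝ E]

theorem deriv_time_slice {F : ℝ × E → ℝ} {t : ℝ} {x : E} (hF : DifferentiableAt ℝ F (t, x)) :
    deriv (fun s => F (s, x)) t = fderiv ℝ F (t, x) (1, 0) :=
  (hF.hasFDerivAt.comp_hasDerivAt t ((hasDerivAt_id t).prodMk (hasDerivAt_const t x))).deriv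

theorem fderiv_space_slice {F : ℝ × E → ℝ} {t : ℝ} {x : E} (hF : DifferentiableAt ℝ F (t, x))
    (w : E) : fderiv ℝ (fun y => F (t, y)) x w = fderiv ℝ F (t, x) (0, w) := by
  have h := hF.hasFDerivAt.comp x ((hasFDerivAt_const t x).prodMk (hasFDerivAt_id x))
  rw [show (fun y => F (t, y)) = F ∘ fun y => (t, y) from rfl, h.fderiv]
  simp

variable {I : Set ℝ} {v : ℝ → E → ℝ} {t : ℝ} {k m : WithTop ℕ∞}

theorem contDiff_slice (hv : ContDiffOn ℝ k (uncurry v) (I ×ˢ univ)) (ht : t ∈ I) :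
    ContDiff ℝ k (v t) :=
  hv.comp_contDiff (contDiff_const.prodMk contDiff_id) fun _ => ⟨ht, trivial⟩

theorem differentiableAt_time_slice (hI : IsOpen I) (hv : ContDiffOn ℝ k (uncurry v) (I ×ˢ univ))
    (hk : k ≠ 0) (ht : t ∈ I) (x : E) : DifferentiableAt ℝ (fun s => v s x) t :=
  ((hv.contDiffAt ((hI.prod isOpen_univ).mem_nhds ⟨ht, trivial⟩)).differentiableAt hk).comp t
    ((hasDerivAt_id t).prodMk (hasDerivAt_const t x)).differentiableAt

theorem contDiffOn_fderiv_slice (hI : IsOpen I) (hv : ContDiffOn ℝ k (uncurry v) (I ×ˢ univ))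
    (hmk : m + 1 ≤ k) (w : E) :
    ContDiffOn ℝ m (uncurry fun s y => fderiv ℝ (v s) y w) (I ×ˢ univ) := by
  have hU := hI.prod (isOpen_univ (X := E))
  refine ((hv.fderiv_of_isOpen hU hmk).clm_apply (contDiffOn_const (c := ((0 : ℝ), w)))).congr
    fun p hp => ?_
  have hk : k ≠ 0 := fun h => by simp [h] at hmk
  exact fderiv_space_slice ((hv.differentiableOn hk).differentiableAt (hU.mem_nhds hp)) w

-- Both sides are the mixed second derivative of `uncurry v` at `(t, x)`.
theorem deriv_fderiv_slice_comm (hI : IsOpen I) (hv : ContDiffOn ℝ 2 (uncurry v) (I ×ˢ univ))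
    (ht : t ∈ I) (x w : E) :
    deriv (fun s => fderiv ℝ (v s) x w) t = fderiv ℝ (fun y => deriv (fun s => v s y) t) x w := by
  have hU := hI.prod (isOpen_univ (X := E))
  have hdiff : ∀ p ∈ I ×ˢ univ, DifferentiableAt ℝ (uncurry v) p := fun p hp =>
    (hv.differentiableOn two_ne_zero).differentiableAt (hU.mem_nhds hp)
  have hdiff' : ∀ a : ℝ × E, DifferentiableAt ℝ (fun q => fderiv ℝ (uncurry v) q a) (t, x) :=
    fun a => (((hv.fderiv_of_isOpen hU (m := 1) le_rfl).clm_apply contDiffOn_const).differentiableOn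
      one_ne_zero).differentiableAt (hU.mem_nhds ⟨ht, trivial⟩)
  have hspace : (fun s => fderiv ℝ (v s) x w) =ᶠ[nhds t]
      fun s => fderiv ℝ (uncurry v) (s, x) (0, w) := by
    filter_upwards [hI.mem_nhds ht] with s hs
    exact fderiv_space_slice (hdiff _ ⟨hs, trivial⟩) w
  have htime : (fun y => deriv (fun s => v s y) t) = fun y => fderiv ℝ (uncurry v) (t, y) (1, 0) :=
    funext fun y => deriv_time_slice (hdiff _ ⟨ht, trivial⟩)
  rw [hspace.deriv_eq, htime, deriv_time_slice (hdiff' _), fderiv_space_slice (hdiff' _)]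
  exact fderiv_fderiv_apply_comm hU hv ⟨ht, trivial⟩ _ _

end SpaceTime

section HeatFlow

variable {n : ℕ} {I : Set ℝ} {v : ℝ → (Fin n → ℝ) → ℝ} {t : ℝ}

theorem hasDerivAt_pd_slice (hI : IsOpen I) (hv : ContDiffOn ℝ 2 (uncurry v) (I ×ˢ univ))
    (ht : t ∈ I) (i : Fin n) (x : Fin n → ℝ) :
    HasDerivAt (fun s => pd i (v s) x) (pd i (fun y => deriv (fun s => v s y) t) x) t := by
  unfold pd
  rw [← deriv_fderiv_slice_comm hI hv ht]
  exact (differentiableAt_time_slice hI (contDiffOn_fderiv_slice hI hv (m := 1) le_rfl _)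
    one_ne_zero ht x).hasDerivAt

theorem hasDerivAt_lap_slice (hI : IsOpen I) (hv : ContDiffOn ℝ 3 (uncurry v) (I ×ˢ univ))
    (ht : t ∈ I) (x : Fin n → ℝ) :
    HasDerivAt (fun s => lap (v s) x) (lap (fun y => deriv (fun s => v s y) t) x) t := by
  have hpd : ∀ i, ContDiffOn ℝ 2 (uncurry fun s => pd i (v s)) (I ×ˢ univ) :=
    fun i => contDiffOn_fderiv_slice hI hv le_rfl _
  have hcomm : ∀ i, (fun y => deriv (fun s => pd i (v s) y) t)
      = pd i (fun y => deriv (fun s => v s y) t) :=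
    fun i => funext fun y => (hasDerivAt_pd_slice hI (hv.of_le (by norm_num)) ht i y).deriv
  have h := HasDerivAt.fun_sum fun i (_ : i ∈ Finset.univ) => hasDerivAt_pd_slice hI (hpd i) ht i x
  refine h.congr_deriv (Finset.sum_congr rfl fun i _ => ?_)
  rw [hcomm i]

theorem hasDerivAt_gradSq_slice (hI : IsOpen I) (hv : ContDiffOn ℝ 2 (uncurry v) (I ×ˢ univ))
    (ht : t ∈ I) (x : Fin n → ℝ) :
    HasDerivAt (fun s => gradSq (v s) x)
      (2 * gradInner (v t) (fun y => deriv (fun s => v s y) t) x) t := by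
  refine (HasDerivAt.fun_sum fun i _ => (hasDerivAt_pd_slice hI hv ht i x).fun_pow 2).congr_deriv ?_
  simp only [gradInner, Finset.mul_sum]
  refine Finset.sum_congr rfl fun i _ => ?_
  ring

def harnackQuantity (α β b c : ℝ) (v : ℝ → (Fin n → ℝ) → ℝ) (t : ℝ) (x : Fin n → ℝ) : ℝ :=
  α * lap (v t) x - β * gradSq (v t) x - b * v t x / t - c * n / t

variable (α β b c : ℝ)

theorem deriv_harnackQuantity (hI : IsOpen I) (hv : ContDiffOn ℝ 3 (uncurry v) (I ×ˢ univ))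
    (ht : t ∈ I) (ht0 : t ≠ 0) (x : Fin n → ℝ) :
    deriv (fun s => harnackQuantity α β b c v s x) t
      = α * lap (fun y => deriv (fun s => v s y) t) x
        - 2 * β * gradInner (v t) (fun y => deriv (fun s => v s y) t) x
        - b * deriv (fun s => v s x) t / t + b * v t x / t ^ 2 + c * n / t ^ 2 := by
  have hV := (differentiableAt_time_slice hI hv three_ne_zero ht x).hasDerivAt
  have h := ((((hasDerivAt_lap_slice hI hv ht x).const_mul α).sub
    ((hasDerivAt_gradSq_slice hI (hv.of_le (by norm_num)) ht x).const_mul β)).sub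
    ((hV.const_mul b).div (hasDerivAt_id t) ht0)).sub
    ((hasDerivAt_const t (c * n)).div (hasDerivAt_id t) ht0)
  refine HasDerivAt.deriv ?_
  convert h using 1
  · rfl
  · simp only [id]
    field_simp
    ring

theorem lap_harnackQuantity (hf : ContDiff ℝ 4 (v t)) (x : Fin n → ℝ) :
    lap (harnackQuantity α β b c v t) x
      = α * lap (lap (v t)) x - β * lap (gradSq (v t)) x - b * lap (v t) x / t := by
  have hf2 : ContDiff ℝ 2 (v t) := hf.of_le (by norm_num)
  have hL : ContDiff ℝ 2 (lap (v t)) := contDiff_lap hf le_rfl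
  have hG : ContDiff ℝ 2 (gradSq (v t)) := contDiff_gradSq hf (by norm_num)
  show lap (fun y => α * lap (v t) y - β * gradSq (v t) y - b * v t y / t - c * n / t) x = _
  rw [lap_fun_sub (by fun_prop) contDiff_const, lap_const, lap_fun_sub (by fun_prop) (by fun_prop),
    lap_fun_sub (by fun_prop) (by fun_prop), lap_const_mul _ hL, lap_const_mul _ hG,
    lap_div_const _ (by fun_prop), lap_const_mul _ hf2]
  ring

theorem gradInner_harnackQuantity (hf : ContDiff ℝ 3 (v t)) (x : Fin n → ℝ) :
    gradInner (harnackQuantity α β b c v t) (v t) x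
      = α * gradInner (lap (v t)) (v t) x - β * gradInner (gradSq (v t)) (v t) x
        - b * gradSq (v t) x / t := by
  have hf1 : Differentiable ℝ (v t) := hf.differentiable (by norm_num)
  have hL : Differentiable ℝ (lap (v t)) :=
    (contDiff_lap hf (m := 1) le_rfl).differentiable one_ne_zero
  have hG : Differentiable ℝ (gradSq (v t)) :=
    (contDiff_gradSq hf (m := 1) (by norm_num)).differentiable one_ne_zero
  simp only [gradInner, gradSq, Finset.mul_sum, Finset.sum_div, ← Finset.sum_sub_distrib]
  refine Finset.sum_congr rfl fun i _ => ?_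
  show pd i (fun y => α * lap (v t) y - β * gradSq (v t) y - b * v t y / t - c * n / t) x * _ = _
  rw [pd_fun_sub i (by fun_prop) (by fun_prop), pd_const, pd_fun_sub i (by fun_prop) (by fun_prop),
    pd_fun_sub i (by fun_prop) (by fun_prop), pd_const_mul i _ (hL x), pd_const_mul i _ (hG x),
    pd_div_const i _ (by fun_prop), pd_const_mul i _ (hf1 x)]
  ring

theorem deriv_harnackQuantity_of_heat (hI : IsOpen I) (hv : ContDiffOn ℝ 4 (uncurry v) (I ×ˢ univ))
    (ht : t ∈ I) (ht0 : t ≠ 0)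
    (heq : ∀ y, deriv (fun s => v s y) t = lap (v t) y - gradSq (v t) y - n / (2 * t))
    (x : Fin n → ℝ) :
    deriv (fun s => harnackQuantity α β b c v s x) t
      = lap (harnackQuantity α β b c v t) x - 2 * gradInner (harnackQuantity α β b c v t) (v t) x
        - 2 * (α - β) * ∑ i, ∑ j, hess i j (v t) x ^ 2 - b * gradSq (v t) x / t
        + b * v t x / t ^ 2 + c * n / t ^ 2 + b * n / (2 * t ^ 2) := by
  have hf : ContDiff ℝ 4 (v t) := contDiff_slice hv ht
  have hL : ContDiff ℝ 2 (lap (v t)) := contDiff_lap hf le_rfl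
  have hG : ContDiff ℝ 2 (gradSq (v t)) := contDiff_gradSq hf (by norm_num)
  have hvt : (fun y => deriv (fun s => v s y) t)
      = fun y => lap (v t) y - gradSq (v t) y - n / (2 * t) := funext heq
  have hlap_vt : lap (fun y => deriv (fun s => v s y) t) x
      = lap (lap (v t)) x - lap (gradSq (v t)) x := by
    rw [hvt, lap_fun_sub (hL.sub hG) contDiff_const, lap_fun_sub hL hG, lap_const, sub_zero]
  have hgrad_vt : gradInner (v t) (fun y => deriv (fun s => v s y) t) x
      = gradInner (v t) (lap (v t)) x - gradInner (v t) (gradSq (v t)) x := by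
    simp only [gradInner, ← Finset.sum_sub_distrib, hvt]
    refine Finset.sum_congr rfl fun i _ => ?_
    rw [pd_fun_sub i ((hL.sub hG).differentiable two_ne_zero x) (differentiableAt_const _),
      pd_const, pd_fun_sub i (hL.differentiable two_ne_zero x) (hG.differentiable two_ne_zero x)]
    ring
  rw [deriv_harnackQuantity α β b c hI (hv.of_le (by norm_num)) ht ht0,
    lap_harnackQuantity α β b c hf,
    gradInner_harnackQuantity α β b c (hf.of_le (by norm_num)), hlap_vt, hgrad_vt, heq,
    lap_gradSq (hf.of_le (by norm_num)), gradInner_comm (lap (v t)),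
    gradInner_comm (gradSq (v t))]
  field_simp
  ring

end HeatFlow

theorem evolution_P_general_general
    (n : ℕ) (v : ℝ → (Fin n → ℝ) → ℝ)
    (hsmooth : ContDiffOn ℝ (⊤ : ℕ∞) (fun p : ℝ × (Fin n → ℝ) => v p.1 p.2)
      (Set.Ioi 0 ×ˢ Set.univ))
    (heq : ∀ t > (0:ℝ), ∀ x : Fin n → ℝ,
      deriv (fun s => v s x) t = lap (v t) x - gradSq (v t) x - n / (2 * t))
    (α β b c l : ℝ) (hα : α ≠ 0)
    (P : ℝ → (Fin n → ℝ) → ℝ)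
    (hP : ∀ t x, P t x = α * lap (v t) x - β * gradSq (v t) x - b * v t x / t - c * n / t) :
    ∀ t > (0:ℝ), ∀ x : Fin n → ℝ,
      deriv (fun s => P s x) t =
        lap (P t) x - 2 * (∑ i, pd i (P t) x * pd i (v t) x)
        - 2 * (α - β) *
            (∑ i, ∑ j, (hess i j (v t) x - (l / (2 * t)) * (if i = j then (1:ℝ) else 0)) ^ 2)
        - (2 * (α - β) / α) * (l / t) * P t x
        - (b + 2 * (α - β) * β * l / α) * (gradSq (v t) x / t)
        + (1 - 2 * (α - β) * l / α) * (b * v t x / t ^ 2)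
        + (1 - 2 * (α - β) * l / α) * (c * n / t ^ 2)
        + (α - β) * n * l ^ 2 / (2 * t ^ 2)
        + b * n / (2 * t ^ 2) := by
  intro t ht x
  obtain rfl : P = harnackQuantity α β b c v := funext fun s => funext (hP s)
  have hdiag : ∑ i, hess i i (v t) x = lap (v t) x := rfl
  have hgrad : ∑ i, pd i (harnackQuantity α β b c v t) x * pd i (v t) x
      = gradInner (harnackQuantity α β b c v t) (v t) x := rfl
  rw [deriv_harnackQuantity_of_heat α β b c isOpen_Ioi (hsmooth.of_le ENat.LEInfty.out) ht ht.ne'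
      (heq t ht) x, hgrad, sum_sq_sub_mul_ite, hdiag, Fintype.card_fin, hP]
  field_simp
  ring

/-- Lemma 3.1: general evolution equation for `P = αΔv − β|∇v|² − b·v/t − c·n/t` when
`∂v/∂t = Δv − |∇v|² − n/(2t)` on flat space. -/
theorem evolution_P_general
    (n : ℕ) (hn : 1 ≤ n) (v : ℝ → (Fin n → ℝ) → ℝ)
    (hsmooth : ContDiffOn ℝ (⊤ : ℕ∞) (fun p : ℝ × (Fin n → ℝ) => v p.1 p.2)
      (Set.Ioi 0 ×ˢ Set.univ))
    (heq : ∀ t > (0:ℝ), ∀ x : Fin n → ℝ,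
      deriv (fun s => v s x) t = lap (v t) x - gradSq (v t) x - n / (2 * t))
    (α β b c l : ℝ) (hα : α ≠ 0)
    (P : ℝ → (Fin n → ℝ) → ℝ)
    (hP : ∀ t x, P t x = α * lap (v t) x - β * gradSq (v t) x - b * v t x / t - c * n / t) :
    ∀ t > (0:ℝ), ∀ x : Fin n → ℝ,
      deriv (fun s => P s x) t =
        lap (P t) x - 2 * (∑ i, pd i (P t) x * pd i (v t) x)
        - 2 * (α - β) *
            (∑ i, ∑ j, (hess i j (v t) x - (l / (2 * t)) * (if i = j then (1:ℝ) else 0)) ^ 2)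
        - (2 * (α - β) / α) * (l / t) * P t x
        - (b + 2 * (α - β) * β * l / α) * (gradSq (v t) x / t)
        + (1 - 2 * (α - β) * l / α) * (b * v t x / t ^ 2)
        + (1 - 2 * (α - β) * l / α) * (c * n / t ^ 2)
        + (α - β) * n * l ^ 2 / (2 * t ^ 2)
        + b * n / (2 * t ^ 2) :=
  evolution_P_general_general n v hsmooth heq α β b c l hα P hP
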